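/- Suppose M > 0, N > 0, p ≤ 1 and δ₁/K₀ > δ₂. Let ξ ∈ (0, √(B/(A·M))) be the unique solution of the convective transcendental equation G(M,p,y) = y + N·y³, and let ω ∈ (0, √(B/(A·M))) satisfy the limiting (K₀ = 0) equation δ₁(1 − (A·M/B)y²)·exp((p−1)y²)/g(p,y) − δ₂(1 + M·y²)G₂(y) = y + N·y³. Then ξ < ω. -/
import Mathlib

open Real MeasureTheory Filter Set

/-- `g p y = ∫₀^y exp(−r² + p·r·y) dr`. -/
noncomputable def g (p y : ℝ) : ℝ := ∫ r in (0:ℝ)..y, Real.exp (-r^2 + p*r*y)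

/-- Complementary error function `erfc z = (2/√π)∫_z^∞ exp(−r²) dr`. -/
noncomputable def erfc (z : ℝ) : ℝ := (2 / Real.sqrt π) * ∫ r in Set.Ioi z, Real.exp (-r^2)

/-- `G₁(p,y) = exp((p−1)y²)/(K₀ + g(p,y))`. -/
noncomputable def G₁ (K₀ p y : ℝ) : ℝ := Real.exp ((p-1)*y^2) / (K₀ + g p y)

/-- `G₂(y) = exp(−γ₀²y²)/erfc(γ₀y)`. -/
noncomputable def G₂ (γ₀ y : ℝ) : ℝ := Real.exp (-(γ₀^2*y^2)) / erfc (γ₀*y)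

/-- `G(M,p,y) = δ₁(1 − (A·M/B)y²)G₁(p,y) − δ₂(1 + M·y²)G₂(y)`. -/
noncomputable def Gfun (A B δ₁ δ₂ K₀ γ₀ M p y : ℝ) : ℝ :=
  δ₁ * (1 - A*M/B * y^2) * G₁ K₀ p y - δ₂ * (1 + M*y^2) * G₂ γ₀ y

/- ## Auxiliary lemmas -/

lemma g_pos (p : ℝ) {y : ℝ} (hy : 0 < y) : 0 < g p y :=
  intervalIntegral.intervalIntegral_pos_of_pos
    ((by continuity : Continuous fun r : ℝ => Real.exp (-r^2 + p*r*y)).intervalIntegrable 0 y)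
    (fun x => Real.exp_pos _) hy

lemma exp_mul_g (p y : ℝ) :
    Real.exp ((1-p)*y^2) * g p y
      = ∫ r in (0:ℝ)..y, Real.exp ((1-p)*y^2 + (-r^2 + p*r*y)) := by
  unfold g
  rw [← intervalIntegral.integral_const_mul]
  congr 1; funext r; rw [← Real.exp_add]

lemma H_mono {p y₁ y₂ : ℝ} (hp : p ≤ 1) (h0 : 0 < y₁) (h12 : y₁ ≤ y₂) :
    Real.exp ((1-p)*y₁^2) * g p y₁ ≤ Real.exp ((1-p)*y₂^2) * g p y₂ := by
  rw [exp_mul_g, exp_mul_g]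
  have hi1 : IntervalIntegrable (fun r => Real.exp ((1-p)*y₁^2 + (-r^2 + p*r*y₁)))
      volume 0 y₁ := (by continuity :
        Continuous fun r : ℝ => Real.exp ((1-p)*y₁^2 + (-r^2 + p*r*y₁))).intervalIntegrable _ _
  have hi2 : ∀ a b : ℝ, IntervalIntegrable (fun r => Real.exp ((1-p)*y₂^2 + (-r^2 + p*r*y₂)))
      volume a b := fun a b => (by continuity :
        Continuous fun r : ℝ => Real.exp ((1-p)*y₂^2 + (-r^2 + p*r*y₂))).intervalIntegrable _ _
  have step1 : (∫ r in (0:ℝ)..y₁, Real.exp ((1-p)*y₁^2 + (-r^2 + p*r*y₁)))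
      ≤ ∫ r in (0:ℝ)..y₁, Real.exp ((1-p)*y₂^2 + (-r^2 + p*r*y₂)) := by
    apply intervalIntegral.integral_mono_on h0.le hi1 (hi2 0 y₁)
    intro r hr
    apply Real.exp_le_exp.mpr
    obtain ⟨hr0, hr1⟩ := hr
    rcases le_or_gt 0 p with hp0 | hp0
    · have h1 : 0 ≤ (1-p) * ((y₂-y₁)*(y₂+y₁)) := by
        apply mul_nonneg (by linarith)
        apply mul_nonneg (by linarith) (by linarith)
      have h2 : 0 ≤ p*r*(y₂-y₁) := by
        apply mul_nonneg (mul_nonneg hp0 hr0) (by linarith)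
      nlinarith [h1, h2]
    · have h3 : p*y₂ ≤ p*r := by nlinarith
      have h4 : 0 ≤ (y₂-y₁) * ((1-p)*(y₁+y₂) + p*y₂) := by
        apply mul_nonneg (by linarith)
        nlinarith
      nlinarith [h3, h4]
  have step2 : (∫ r in (0:ℝ)..y₁, Real.exp ((1-p)*y₂^2 + (-r^2 + p*r*y₂)))
      ≤ ∫ r in (0:ℝ)..y₂, Real.exp ((1-p)*y₂^2 + (-r^2 + p*r*y₂)) := by
    apply intervalIntegral.integral_mono_interval le_rfl h0.le h12
      (Filter.Eventually.of_forall fun x => (Real.exp_pos _).le) (hi2 0 y₂)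
  linarith

lemma G₁_eq {K₀ p y : ℝ} (hK₀ : 0 < K₀) (hy : 0 < y) :
    G₁ K₀ p y = (K₀ * Real.exp ((1-p)*y^2) + Real.exp ((1-p)*y^2) * g p y)⁻¹ := by
  have hg := g_pos p hy
  have he : Real.exp ((1-p)*y^2) ≠ 0 := Real.exp_ne_zero _
  unfold G₁
  rw [show K₀ * Real.exp ((1-p)*y^2) + Real.exp ((1-p)*y^2) * g p y
      = Real.exp ((1-p)*y^2) * (K₀ + g p y) by ring, mul_inv,
    ← Real.exp_neg, show -((1-p)*y^2) = (p-1)*y^2 by ring, div_eq_mul_inv]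

lemma G₁_pos {K₀ p y : ℝ} (hK₀ : 0 < K₀) (hy : 0 < y) : 0 < G₁ K₀ p y := by
  unfold G₁
  exact div_pos (Real.exp_pos _) (by linarith [g_pos p hy])

lemma G₁_anti {K₀ p y₁ y₂ : ℝ} (hK₀ : 0 < K₀) (hp : p ≤ 1) (h0 : 0 < y₁) (h12 : y₁ ≤ y₂) :
    G₁ K₀ p y₂ ≤ G₁ K₀ p y₁ := by
  rw [G₁_eq hK₀ h0, G₁_eq hK₀ (h0.trans_le h12)]
  have hD1 : 0 < K₀ * Real.exp ((1-p)*y₁^2) + Real.exp ((1-p)*y₁^2) * g p y₁ := by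
    have := g_pos p h0
    positivity
  apply inv_anti₀ hD1
  have hK : K₀ * Real.exp ((1-p)*y₁^2) ≤ K₀ * Real.exp ((1-p)*y₂^2) := by
    apply mul_le_mul_of_nonneg_left _ hK₀.le
    apply Real.exp_le_exp.mpr
    apply mul_le_mul_of_nonneg_left (by nlinarith) (by linarith)
  linarith [H_mono hp h0 h12]

lemma integrableOn_exp_neg_sq (z : ℝ) :
    IntegrableOn (fun r : ℝ => Real.exp (-r^2)) (Set.Ioi z) volume := by
  have : Integrable fun r : ℝ => Real.exp (-r^2) := by
    simpa using integrable_exp_neg_mul_sq (one_pos)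
  exact this.integrableOn

lemma tail_pos (z : ℝ) : 0 < ∫ r in Set.Ioi z, Real.exp (-r^2) := by
  rw [setIntegral_pos_iff_support_of_nonneg_ae
    (Filter.Eventually.of_forall fun x => (Real.exp_pos _).le) (integrableOn_exp_neg_sq z)]
  have hs : Function.support (fun r : ℝ => Real.exp (-r^2)) = Set.univ := by
    ext x; simp [Real.exp_ne_zero]
  rw [hs, Set.univ_inter, Real.volume_Ioi]
  simp

lemma erfc_pos (z : ℝ) : 0 < erfc z := by
  unfold erfc
  exact mul_pos (div_pos two_pos (Real.sqrt_pos.mpr Real.pi_pos)) (tail_pos z)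

lemma tail_anti {z₁ z₂ : ℝ} (hz1 : 0 < z₁) (h12 : z₁ ≤ z₂) :
    (∫ r in Set.Ioi z₂, Real.exp (-r^2))
      ≤ Real.exp (z₁^2 - z₂^2) * ∫ r in Set.Ioi z₁, Real.exp (-r^2) := by
  set d := z₂ - z₁ with hd
  have htrans : (∫ r in Set.Ioi z₂, Real.exp (-r^2))
      = ∫ r in Set.Ioi z₁, Real.exp (-(r+d)^2) := by
    have := (measurePreserving_add_right volume d).setIntegral_preimage_emb
      (MeasurableEquiv.addRight d).measurableEmbedding
      (fun r : ℝ => Real.exp (-r^2)) (Set.Ioi z₂)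
    simpa [Set.preimage_add_const_Ioi, show z₂ - d = z₁ by rw [hd]; ring] using this.symm
  rw [htrans, ← integral_const_mul]
  have hint : Integrable fun r : ℝ => Real.exp (-r^2) := by
    simpa using integrable_exp_neg_mul_sq (one_pos)
  apply setIntegral_mono_on ((hint.comp_add_right d).integrableOn)
    (((integrableOn_exp_neg_sq z₁)).const_mul _) measurableSet_Ioi
  intro r hr
  rw [← Real.exp_add]
  apply Real.exp_le_exp.mpr
  have hr' : z₁ < r := hr
  nlinarith [mul_nonneg (sub_nonneg.2 h12) (sub_pos.2 hr').le]

lemma G₂_key {z₁ z₂ : ℝ} (hz1 : 0 < z₁) (h12 : z₁ ≤ z₂) :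
    Real.exp (-(z₁^2)) / erfc z₁ ≤ Real.exp (-(z₂^2)) / erfc z₂ := by
  rw [div_le_div_iff₀ (erfc_pos z₁) (erfc_pos z₂)]
  unfold erfc
  have hC : (0:ℝ) ≤ 2 / Real.sqrt π := by positivity
  have key2 : Real.exp (-(z₁^2)) * ∫ r in Set.Ioi z₂, Real.exp (-r^2)
      ≤ Real.exp (-(z₂^2)) * ∫ r in Set.Ioi z₁, Real.exp (-r^2) := by
    calc Real.exp (-(z₁^2)) * ∫ r in Set.Ioi z₂, Real.exp (-r^2)
        ≤ Real.exp (-(z₁^2)) * (Real.exp (z₁^2 - z₂^2) * ∫ r in Set.Ioi z₁, Real.exp (-r^2)) :=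
          mul_le_mul_of_nonneg_left (tail_anti hz1 h12) (Real.exp_pos _).le
      _ = Real.exp (-(z₂^2)) * ∫ r in Set.Ioi z₁, Real.exp (-r^2) := by
          rw [← mul_assoc, ← Real.exp_add, show -(z₁^2) + (z₁^2 - z₂^2) = -(z₂^2) by ring]
  calc Real.exp (-(z₁^2)) * ((2 / Real.sqrt π) * ∫ r in Set.Ioi z₂, Real.exp (-r^2))
      = (2 / Real.sqrt π) * (Real.exp (-(z₁^2)) * ∫ r in Set.Ioi z₂, Real.exp (-r^2)) := by ring
    _ ≤ (2 / Real.sqrt π) * (Real.exp (-(z₂^2)) * ∫ r in Set.Ioi z₁, Real.exp (-r^2)) :=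
        mul_le_mul_of_nonneg_left key2 hC
    _ = Real.exp (-(z₂^2)) * ((2 / Real.sqrt π) * ∫ r in Set.Ioi z₁, Real.exp (-r^2)) := by ring

lemma G₂_pos (γ₀ y : ℝ) : 0 < G₂ γ₀ y :=
  div_pos (Real.exp_pos _) (erfc_pos _)

lemma G₂_mono {γ₀ y₁ y₂ : ℝ} (hγ : 0 < γ₀) (h0 : 0 < y₁) (h12 : y₁ ≤ y₂) :
    G₂ γ₀ y₁ ≤ G₂ γ₀ y₂ := by
  unfold G₂
  have h1 : γ₀^2*y₁^2 = (γ₀*y₁)^2 := by ring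
  have h2 : γ₀^2*y₂^2 = (γ₀*y₂)^2 := by ring
  rw [h1, h2]
  exact G₂_key (mul_pos hγ h0) (mul_le_mul_of_nonneg_left h12 hγ.le)

lemma cube_aux {N ω ξ : ℝ} (hN : 0 < N) (hω : 0 < ω) (hlt : ω ≤ ξ) :
    ω + N * ω^3 ≤ ξ + N * ξ^3 := by
  have h3 : 0 ≤ (ξ-ω)*(ξ^2+ξ*ω+ω^2) := by
    apply mul_nonneg (by linarith)
    nlinarith
  nlinarith [mul_nonneg hN.le h3]

set_option maxHeartbeats 1000000 in
/-- For `M > 0`, `N > 0`, `p ≤ 1` and `δ₁/K₀ > δ₂`, if `ξ ∈ (0, √(B/(A·M)))`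
solves the convective equation and `ω ∈ (0, √(B/(A·M)))` solves the limiting (`K₀ = 0`)
equation, then `ξ < ω`. -/
theorem stmt9 (A B δ₁ δ₂ K₀ γ₀ M N p ξ ω : ℝ)
    (hA : 0 < A) (hB : 0 < B) (hδ₁ : 0 < δ₁) (hδ₂ : 0 < δ₂)
    (hK₀ : 0 < K₀) (hγ₀ : 0 < γ₀) (hM : 0 < M) (hN : 0 < N) (hp : p ≤ 1)
    (h : δ₂ < δ₁ / K₀)
    (hξpos : 0 < ξ) (hξlt : ξ < Real.sqrt (B / (A * M)))
    (hξeq : Gfun A B δ₁ δ₂ K₀ γ₀ M p ξ = ξ + N * ξ^3)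
    (hωpos : 0 < ω) (hωlt : ω < Real.sqrt (B / (A * M)))
    (hωeq : δ₁ * (1 - A*M/B * ω^2) * (Real.exp ((p-1)*ω^2) / g p ω)
        - δ₂ * (1 + M*ω^2) * G₂ γ₀ ω = ω + N * ω^3) :
    ξ < ω := by
  by_contra hlt
  push_neg at hlt  -- ω ≤ ξ
  have hc : 0 < A*M/B := by positivity
  have hsq : ∀ y : ℝ, 0 < y → y < Real.sqrt (B / (A * M)) → A*M/B * y^2 < 1 := by
    intro y hy hylt
    have ht : 0 < B / (A*M) := by positivity
    have hy2 : y^2 < B / (A*M) := (Real.lt_sqrt hy.le).mp hylt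
    have := mul_lt_mul_of_pos_left hy2 hc
    calc A*M/B * y^2 < A*M/B * (B/(A*M)) := this
      _ = 1 := by field_simp
  have hξc : A*M/B * ξ^2 < 1 := hsq ξ hξpos hξlt
  have hωc : A*M/B * ω^2 < 1 := hsq ω hωpos hωlt
  -- Step 1 : Gfun ξ ≤ Gfun ω
  have hsq' : ω^2 ≤ ξ^2 := by nlinarith
  have hA1 : δ₁ * (1 - A*M/B * ξ^2) * G₁ K₀ p ξ ≤ δ₁ * (1 - A*M/B * ω^2) * G₁ K₀ p ω := by
    apply mul_le_mul (mul_le_mul_of_nonneg_left (by nlinarith) hδ₁.le)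
      (G₁_anti hK₀ hp hωpos hlt) (G₁_pos hK₀ hξpos).le
      (mul_nonneg hδ₁.le (by nlinarith))
  have step1 : Gfun A B δ₁ δ₂ K₀ γ₀ M p ξ ≤ Gfun A B δ₁ δ₂ K₀ γ₀ M p ω := by
    unfold Gfun
    have hB1' : δ₂ * (1 + M*ω^2) * G₂ γ₀ ω ≤ δ₂ * (1 + M*ξ^2) * G₂ γ₀ ξ := by
      apply mul_le_mul (mul_le_mul_of_nonneg_left (by nlinarith) hδ₂.le)
        (G₂_mono hγ₀ hωpos hlt) (G₂_pos _ _).le (by positivity)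
    linarith [hA1]
  -- Step 2 : Gfun ω < limiting LHS at ω
  have step2 : Gfun A B δ₁ δ₂ K₀ γ₀ M p ω
      < δ₁ * (1 - A*M/B * ω^2) * (Real.exp ((p-1)*ω^2) / g p ω)
        - δ₂ * (1 + M*ω^2) * G₂ γ₀ ω := by
    unfold Gfun G₁
    have hg := g_pos p hωpos
    have hdiv : Real.exp ((p-1)*ω^2) / (K₀ + g p ω) < Real.exp ((p-1)*ω^2) / g p ω :=
      div_lt_div_of_pos_left (Real.exp_pos _) hg (by linarith)
    have hcoef : 0 < δ₁ * (1 - A*M/B * ω^2) := mul_pos hδ₁ (by linarith)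
    have := mul_lt_mul_of_pos_left hdiv hcoef
    linarith [this]
  -- Step 3 : ω + Nω³ ≤ ξ + Nξ³
  have step3 : ω + N * ω^3 ≤ ξ + N * ξ^3 := cube_aux hN hωpos hlt
  rw [hξeq] at step1
  rw [hωeq] at step2
  linarith
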